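/- Let $I=(t^{v_1},\dots,t^{v_q})$ be a monomial ideal of $S$ with incidence matrix $A$. Then $I$ is a normal ideal if and only if the linear system $x\ge 0;\, xA\ge 1$ has the integer rounding property, that is, for each $\alpha\in\mathbb{Z}^s$ for which $\max\{\langle y,1\rangle \mid y\ge 0,\ Ay\le\alpha\}$ is finite, one has $\max\{\langle y,1\rangle\mid y\in\mathbb{N}^q,\ Ay\le\alpha\} = \lfloor \max\{\langle y,1\rangle\mid y\ge 0,\ Ay\le\alpha\}\rfloor$. -/

import Mathlib

open MvPolynomial

/-- The monomial `t^a` in `K[t_1,…,t_s]`. -/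
noncomputable def mono (K : Type*) [Field K] {s : ℕ} (a : Fin s → ℕ) :
    MvPolynomial (Fin s) K :=
  MvPolynomial.monomial (Finsupp.equivFunOnFinite.symm a) 1

/-- The monomial ideal generated by the monomials `t^{v i}`. -/
noncomputable def monIdeal (K : Type*) [Field K] {s q : ℕ} (v : Fin q → Fin s → ℕ) :
    Ideal (MvPolynomial (Fin s) K) :=
  Ideal.span (Set.range fun i => mono K (v i))

/-- The integral closure of a monomial ideal `J`: the ideal generated by the
monomials `t^a` such that `(t^a)^p ∈ J^p` for some `p ≥ 1`. -/
noncomputable def intCl {K : Type*} [Field K] {s : ℕ}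
    (J : Ideal (MvPolynomial (Fin s) K)) : Ideal (MvPolynomial (Fin s) K) :=
  Ideal.span {m | (∃ a : Fin s → ℕ, m = mono K a) ∧ ∃ p : ℕ, 1 ≤ p ∧ m ^ p ∈ J ^ p}

/-- A monomial ideal is normal if `I^n` is integrally closed for all `n ≥ 1`. -/
def IsNormalIdeal {K : Type*} [Field K] {s : ℕ}
    (I : Ideal (MvPolynomial (Fin s) K)) : Prop :=
  ∀ n : ℕ, 1 ≤ n → intCl (I ^ n) = I ^ n

/-!
`t^a ∈ I^n` iff `a ≥ ∑ zᵢ vᵢ` for some `z ∈ ℕ^q` with `∑ zᵢ = n`, and `t^a` lies in the integral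
closure of `I^n` iff `p • a` bounds such a sum with `∑ zᵢ = n p` for some `p ≥ 1`. After clearing
denominators the second condition says that `n` is at most the value `r` of the linear program
`max {⟨y, 1⟩ | y ≥ 0, A y ≤ a}`, and the first that the integer program reaches `n`. Hence
normality says precisely that the integer program reaches `⌊r⌋`.

For the converse one needs the linear program to have a maximum. If some `vᵢ = 0` the
normality condition holds trivially; otherwise the feasible polyhedron has no recession
direction, every feasible point can be pushed to a vertex (a point whose tight constraints span
the dual space) without decreasing the objective, and there are only finitely many vertices.
-/

lemma Submodule.exists_ne_zero_mem_dualCoannihilator {K V : Type*} [Field K] [AddCommGroup V]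
    [Module K V] [FiniteDimensional K V] {W : Submodule K (Module.Dual K V)} (hW : W ≠ ⊤) :
    ∃ d ∈ W.dualCoannihilator, d ≠ 0 := by
  refine Submodule.exists_mem_ne_zero_of_ne_bot fun hbot => hW ?_
  have h := Subspace.finrank_add_finrank_dualCoannihilator_eq W
  rw [hbot, finrank_bot, add_zero, ← Subspace.dual_finrank_eq] at h
  exact Submodule.eq_top_of_finrank_eq h

section Polyhedron

variable {𝕜 V J : Type*} [Field 𝕜] [AddCommGroup V] [Module 𝕜 V]
  (c : J → Module.Dual 𝕜 V) (b : J → 𝕜)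

def tightSpan (y : V) : Submodule 𝕜 (Module.Dual 𝕜 V) :=
  Submodule.span 𝕜 (c '' {j | c j y = b j})

lemma finite_setOf_tightSpan_eq_top [Finite J] : {y : V | tightSpan c b y = ⊤}.Finite := by
  refine Set.Finite.of_finite_image (f := fun y => {j | c j y = b j}) (Set.toFinite _) ?_
  intro y₁ hy₁ y₂ _ htight
  have hker : tightSpan c b y₁ ≤ LinearMap.ker (Module.Dual.eval 𝕜 V (y₁ - y₂)) := by
    refine Submodule.span_le.mpr ?_
    rintro _ ⟨j, hj₁, rfl⟩
    have hj₁' : c j y₁ = b j := hj₁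
    have hj₂ : c j y₂ = b j := (Set.ext_iff.mp htight j).mp hj₁
    simp [hj₁', hj₂]
  rw [hy₁, top_le_iff, LinearMap.ker_eq_top] at hker
  exact sub_eq_zero.mp <| (Module.forall_dual_apply_eq_zero_iff 𝕜 _).mp (LinearMap.congr_fun hker)

variable [LinearOrder 𝕜] [IsStrictOrderedRing 𝕜] [FiniteDimensional 𝕜 V] [Finite J]

lemma exists_tightSpan_lt (hrec : ∀ d : V, (∀ j, c j d ≤ 0) → d = 0) (u : Module.Dual 𝕜 V)
    {y : V} (hy : ∀ j, c j y ≤ b j) (htop : tightSpan c b y ≠ ⊤) :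
    ∃ y', (∀ j, c j y' ≤ b j) ∧ u y ≤ u y' ∧ tightSpan c b y < tightSpan c b y' := by
  classical
  have : Fintype J := Fintype.ofFinite J
  obtain ⟨d₀, hd₀, hd₀ne⟩ := Submodule.exists_ne_zero_mem_dualCoannihilator htop
  -- moving along `±d₀` keeps the tight constraints tight; choose the sign not decreasing `u`
  obtain ⟨d, hd, hdne, hud⟩ : ∃ d ∈ (tightSpan c b y).dualCoannihilator, d ≠ 0 ∧ 0 ≤ u d := by
    rcases le_total 0 (u d₀) with h | h
    · exact ⟨d₀, hd₀, hd₀ne, h⟩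
    · exact ⟨-d₀, Submodule.neg_mem _ hd₀, neg_ne_zero.mpr hd₀ne, by simpa using h⟩
  rw [Submodule.mem_dualCoannihilator] at hd
  have htight : ∀ j, c j y = b j → c j d = 0 :=
    fun j hj => hd _ (Submodule.subset_span ⟨j, hj, rfl⟩)
  obtain ⟨j₀, hj₀⟩ : ∃ j, 0 < c j d := by
    by_contra! h
    exact hdne (hrec d h)
  -- ratio test: `ratio j₁` is the largest feasible step along `d`, and it makes `j₁` tight
  set B := Finset.univ.filter fun j => 0 < c j d
  set ratio : J → 𝕜 := fun j => (b j - c j y) / c j d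
  obtain ⟨j₁, hj₁B, hj₁min⟩ := B.exists_min_image ratio ⟨j₀, by simpa [B] using hj₀⟩
  have hj₁ : 0 < c j₁ d := by simpa [B] using hj₁B
  have ht : 0 ≤ ratio j₁ := div_nonneg (sub_nonneg.mpr (hy j₁)) hj₁.le
  refine ⟨y + ratio j₁ • d, fun j => ?_, ?_, lt_of_le_of_ne ?_ fun heq => ?_⟩
  · rw [map_add, map_smul, smul_eq_mul]
    rcases le_or_gt (c j d) 0 with hj | hj
    · nlinarith [hy j]
    · have := mul_le_mul_of_nonneg_right (hj₁min j (by simpa [B] using hj)) hj.le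
      rw [div_mul_cancel₀ _ hj.ne'] at this
      linarith
  · simpa using mul_nonneg ht hud
  · refine Submodule.span_mono (Set.image_mono fun j (hj : c j y = b j) => ?_)
    simp [hj, htight j hj]
  · have hmem : c j₁ ∈ tightSpan c b (y + ratio j₁ • d) := by
      refine Submodule.subset_span ⟨j₁, ?_, rfl⟩
      simp [ratio, div_mul_cancel₀ _ hj₁.ne']
    rw [← heq] at hmem
    exact hj₁.ne' (hd _ hmem)

lemma exists_tightSpan_eq_top (hrec : ∀ d : V, (∀ j, c j d ≤ 0) → d = 0)
    (u : Module.Dual 𝕜 V) {y : V} (hy : ∀ j, c j y ≤ b j) :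
    ∃ y', (∀ j, c j y' ≤ b j) ∧ u y ≤ u y' ∧ tightSpan c b y' = ⊤ := by
  induction hW : tightSpan c b y using WellFoundedGT.induction generalizing y with
  | ind W ih =>
    by_cases htop : tightSpan c b y = ⊤
    · exact ⟨y, hy, le_rfl, htop⟩
    obtain ⟨y', hy', huy, hlt⟩ := exists_tightSpan_lt c b hrec u hy htop
    obtain ⟨y'', hy'', huy', htop''⟩ := ih _ (hW ▸ hlt) hy' rfl
    exact ⟨y'', hy'', huy.trans huy', htop''⟩

theorem exists_isMaxOn_polyhedron (hrec : ∀ d : V, (∀ j, c j d ≤ 0) → d = 0)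
    (u : Module.Dual 𝕜 V) {y₀ : V} (hy₀ : ∀ j, c j y₀ ≤ b j) :
    ∃ y ∈ {y | ∀ j, c j y ≤ b j}, IsMaxOn u {y | ∀ j, c j y ≤ b j} y := by
  obtain ⟨y₁, hy₁, -, htop₁⟩ := exists_tightSpan_eq_top c b hrec u hy₀
  obtain ⟨y, ⟨hy, -⟩, hmax⟩ :=
    Set.exists_max_image ({y | ∀ j, c j y ≤ b j} ∩ {y | tightSpan c b y = ⊤}) u
      ((finite_setOf_tightSpan_eq_top c b).inter_of_right _) ⟨y₁, hy₁, htop₁⟩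
  refine ⟨y, hy, fun z hz => ?_⟩
  obtain ⟨z', hz', huz, htop⟩ := exists_tightSpan_eq_top c b hrec u hz
  exact huz.trans (hmax z' ⟨hz', htop⟩)

end Polyhedron

lemma Finset.sum_add_single_one_smul {ι M : Type*} [Fintype ι] [DecidableEq ι] [AddCommMonoid M]
    (z : ι → ℕ) (i : ι) (v : ι → M) :
    ∑ j, (z + Pi.single i 1 : ι → ℕ) j • v j = ∑ j, z j • v j + v i := by
  simp [add_smul, Finset.sum_add_distrib, Pi.single_apply]

def ExponentInPow {s q : ℕ} (v : Fin q → Fin s → ℕ) (n : ℕ) (a : Fin s → ℕ) : Prop :=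
  ∃ z : Fin q → ℕ, ∑ i, z i = n ∧ ∑ i, z i • v i ≤ a

namespace ExponentInPow

variable {s q : ℕ} {v : Fin q → Fin s → ℕ} {n m : ℕ} {a b : Fin s → ℕ}

lemma zero : ExponentInPow v 0 a :=
  ⟨0, by simp, by simp⟩

lemma mono_right (h : ExponentInPow v n a) (hab : a ≤ b) : ExponentInPow v n b :=
  let ⟨z, hz, hza⟩ := h
  ⟨z, hz, hza.trans hab⟩

lemma of_eq_zero {i : Fin q} (hv : v i = 0) : ExponentInPow v n a :=
  ⟨Pi.single i n, by simp, by simp [Pi.single_apply, hv]⟩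

lemma add_gen (h : ExponentInPow v n a) (i : Fin q) : ExponentInPow v (n + 1) (a + v i) := by
  classical
  obtain ⟨z, hz, hza⟩ := h
  refine ⟨z + Pi.single i 1, ?_, ?_⟩
  · simpa [Finset.sum_add_distrib] using hz
  · rw [Finset.sum_add_single_one_smul]
    exact add_le_add_left hza _

lemma exists_add_gen_le (h : ExponentInPow v (n + 1) b) :
    ∃ i a, ExponentInPow v n a ∧ a + v i ≤ b := by
  classical
  obtain ⟨z, hz, hzb⟩ := h
  obtain ⟨i, hi⟩ : ∃ i, z i ≠ 0 := by
    by_contra! h0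
    simp [h0] at hz
  have hz' : z = Function.update z i (z i - 1) + Pi.single i 1 := by
    ext j
    rcases eq_or_ne j i with rfl | hj <;> simp [*]
    omega
  refine ⟨i, _, ⟨Function.update z i (z i - 1), ?_, le_rfl⟩, ?_⟩
  · rw [hz'] at hz
    simpa [Finset.sum_add_distrib] using hz
  · rwa [← Finset.sum_add_single_one_smul, ← hz']

lemma of_le (h : ExponentInPow v m a) (hnm : n ≤ m) : ExponentInPow v n a := by
  induction m, hnm using Nat.le_induction with
  | base => exact h
  | succ m _ ih =>
    obtain ⟨i, b, hb, hba⟩ := h.exists_add_gen_le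
    exact ih ((hb.mono_right le_self_add).mono_right hba)

end ExponentInPow

section Ideal

variable (K : Type*) [Field K] {s q : ℕ}

lemma mono_zero : mono K (0 : Fin s → ℕ) = 1 := by
  rw [mono, ← C_1, C_apply]
  exact congrArg (monomial · 1) (Finsupp.ext fun _ => rfl)

lemma mono_add (a b : Fin s → ℕ) : mono K (a + b) = mono K a * mono K b := by
  rw [mono, mono, mono, monomial_mul, one_mul]
  exact congrArg (monomial · 1) (Finsupp.ext fun _ => rfl)

lemma mono_pow (a : Fin s → ℕ) (p : ℕ) : mono K a ^ p = mono K (p • a) := by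
  rw [mono, mono, monomial_pow, one_pow]
  exact congrArg (monomial · 1) (Finsupp.ext fun _ => rfl)

lemma mono_mem_span_mono_image_iff (S : Set (Fin s → ℕ)) (a : Fin s → ℕ) :
    mono K a ∈ Ideal.span (mono K '' S) ↔ ∃ b ∈ S, b ≤ a := by
  classical
  have hS : mono K '' S =
      (fun e => monomial e (1 : K)) '' (Finsupp.equivFunOnFinite.symm '' S) := by
    rw [Set.image_image]; rfl
  rw [hS, mono, mem_ideal_span_monomial_image, support_monomial, if_neg one_ne_zero]
  simp only [Finset.mem_singleton, forall_eq, Set.exists_mem_image]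
  refine exists_congr fun b => and_congr_right fun _ => ?_
  simp [Finsupp.le_def, Pi.le_def]

variable (v : Fin q → Fin s → ℕ)

lemma monIdeal_pow_eq_span (n : ℕ) :
    monIdeal K v ^ n = Ideal.span (mono K '' {a | ExponentInPow v n a}) := by
  induction n with
  | zero =>
    rw [pow_zero, Ideal.one_eq_top, eq_comm, Ideal.eq_top_iff_one, ← mono_zero K]
    exact Ideal.subset_span ⟨0, ExponentInPow.zero, rfl⟩
  | succ n ih =>
    rw [pow_succ, ih, monIdeal, Ideal.span_mul_span']
    refine le_antisymm (Ideal.span_le.mpr ?_) (Ideal.span_le.mpr ?_)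
    · rintro _ ⟨_, ⟨a, ha, rfl⟩, _, ⟨i, rfl⟩, rfl⟩
      show mono K a * mono K (v i) ∈ _
      rw [SetLike.mem_coe, ← mono_add, mono_mem_span_mono_image_iff]
      exact ⟨_, ha.add_gen i, le_rfl⟩
    · rintro _ ⟨b, hb, rfl⟩
      obtain ⟨i, a, ha, hab⟩ := hb.exists_add_gen_le
      rw [SetLike.mem_coe, ← add_tsub_cancel_of_le hab, mono_add, mono_add]
      exact Ideal.mul_mem_right _ _ (Ideal.subset_span ⟨_, ⟨a, ha, rfl⟩, _, ⟨i, rfl⟩, rfl⟩)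

lemma mono_mem_monIdeal_pow_iff (n : ℕ) (a : Fin s → ℕ) :
    mono K a ∈ monIdeal K v ^ n ↔ ExponentInPow v n a := by
  rw [monIdeal_pow_eq_span, mono_mem_span_mono_image_iff]
  exact ⟨fun ⟨b, hb, hba⟩ => ExponentInPow.mono_right hb hba, fun h => ⟨a, h, le_rfl⟩⟩

lemma isNormalIdeal_monIdeal_iff :
    IsNormalIdeal (monIdeal K v) ↔
      ∀ n p a, 0 < p → ExponentInPow v (n * p) (p • a) → ExponentInPow v n a := by
  simp_rw [← mono_mem_monIdeal_pow_iff K]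
  refine ⟨fun hnormal n p a hp ha => ?_, fun h n _ => le_antisymm ?_ ?_⟩
  · rcases Nat.eq_zero_or_pos n with rfl | hn
    · simp
    rw [← hnormal n hn]
    exact Ideal.subset_span ⟨⟨a, rfl⟩, p, hp, by rwa [mono_pow, ← pow_mul]⟩
  · refine Ideal.span_le.mpr ?_
    rintro _ ⟨⟨a, rfl⟩, p, hp, hpow⟩
    rw [mono_pow, ← pow_mul] at hpow
    exact h n p a hp hpow
  · conv_lhs => rw [monIdeal_pow_eq_span]
    refine Ideal.span_mono ?_
    rintro _ ⟨a, ha, rfl⟩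
    refine ⟨⟨a, rfl⟩, 1, le_rfl, ?_⟩
    rw [pow_one, pow_one]
    exact (mono_mem_monIdeal_pow_iff K v n a).mpr ha

end Ideal

lemma exists_nat_mul_eq_natCast_of_nonneg {ι : Type*} [Fintype ι] (y : ι → ℚ) (hy : ∀ i, 0 ≤ y i) :
    ∃ p : ℕ, 0 < p ∧ ∃ w : ι → ℕ, ∀ i, (w i : ℚ) = p * y i := by
  refine ⟨∏ i, (y i).den, Finset.prod_pos fun i _ => (y i).pos,
    fun i => (∏ j, (y j).den) / (y i).den * (y i).num.toNat, fun i => ?_⟩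
  obtain ⟨m, hm⟩ := Finset.dvd_prod_of_mem (fun j => (y j).den) (Finset.mem_univ i)
  have hnum : ((y i).num.toNat : ℚ) = (y i).num := by
    exact_mod_cast Int.toNat_of_nonneg (Rat.num_nonneg.mpr (hy i))
  dsimp only
  rw [hm, Nat.mul_div_cancel_left _ (y i).pos, Nat.cast_mul, Nat.cast_mul, hnum,
    ← Rat.mul_den_eq_num]
  ring

section Rounding

variable {s q : ℕ} (v : Fin q → Fin s → ℕ)

def lpValues (α : Fin s → ℤ) : Set ℚ :=
  {c : ℚ | ∃ y : Fin q → ℚ, (∀ i, 0 ≤ y i) ∧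
    (∀ k, (∑ i, y i * (v i k : ℚ)) ≤ (α k : ℚ)) ∧ c = ∑ i, y i}

def ipValues (α : Fin s → ℤ) : Set ℚ :=
  {c : ℚ | ∃ y : Fin q → ℕ,
    (∀ k, (∑ i, (y i : ℚ) * (v i k : ℚ)) ≤ (α k : ℚ)) ∧ c = ∑ i, (y i : ℚ)}

lemma ipValues_subset_lpValues (α : Fin s → ℤ) : ipValues v α ⊆ lpValues v α :=
  fun _ ⟨y, hy, hc⟩ => ⟨fun i => y i, fun i => Nat.cast_nonneg (y i), hy, hc⟩

lemma nonneg_of_mem_lpValues {α : Fin s → ℤ} {x : ℚ} (hx : x ∈ lpValues v α) (k : Fin s) :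
    0 ≤ α k := by
  obtain ⟨y, hy, hyα, -⟩ := hx
  have : (0 : ℚ) ≤ α k :=
    (Finset.sum_nonneg fun i _ => mul_nonneg (hy i) (Nat.cast_nonneg _)).trans (hyα k)
  exact_mod_cast this

lemma zero_mem_lpValues {α : Fin s → ℤ} (hα : ∀ k, 0 ≤ α k) : (0 : ℚ) ∈ lpValues v α :=
  ⟨0, fun _ => le_rfl, fun k => by simpa using hα k, by simp⟩

lemma sum_smul_le_iff (z : Fin q → ℕ) (a : Fin s → ℕ) :
    ∑ i, z i • v i ≤ a ↔ ∀ k, ∑ i, (z i : ℚ) * (v i k : ℚ) ≤ (a k : ℚ) := by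
  simp only [Pi.le_def, Finset.sum_apply, Pi.smul_apply, smul_eq_mul]
  exact_mod_cast Iff.rfl

lemma natCast_mem_ipValues_iff (n : ℕ) (a : Fin s → ℕ) :
    (n : ℚ) ∈ ipValues v (fun k => a k) ↔ ExponentInPow v n a := by
  simp only [ipValues, ExponentInPow, sum_smul_le_iff, Set.mem_ofPred_eq, Int.cast_natCast]
  refine exists_congr fun z => ?_
  rw [and_comm, eq_comm]
  norm_cast

lemma exists_exponentInPow_mul {a : Fin s → ℕ} {x : ℚ} (hx : x ∈ lpValues v (fun k => a k))
    {n : ℕ} (hn : (n : ℚ) ≤ x) : ∃ p, 0 < p ∧ ExponentInPow v (n * p) (p • a) := by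
  obtain ⟨y, hy, hya, rfl⟩ := hx
  obtain ⟨p, hp, w, hw⟩ := exists_nat_mul_eq_natCast_of_nonneg y hy
  refine ⟨p, hp, ExponentInPow.of_le ⟨w, rfl, ?_⟩ ?_⟩
  · rw [sum_smul_le_iff]
    intro k
    simp only [hw, Pi.smul_apply, smul_eq_mul, Nat.cast_mul, mul_assoc, ← Finset.mul_sum]
    exact mul_le_mul_of_nonneg_left (by simpa using hya k) (Nat.cast_nonneg p)
  · have : (n * p : ℚ) ≤ ∑ i, (w i : ℚ) := by
      simp only [hw, ← Finset.mul_sum]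
      nlinarith [(Nat.cast_pos.mpr hp : (0 : ℚ) < p)]
    exact_mod_cast this

lemma natCast_mem_lpValues {a : Fin s → ℕ} {n p : ℕ} (hp : 0 < p)
    (h : ExponentInPow v (n * p) (p • a)) : (n : ℚ) ∈ lpValues v (fun k => a k) := by
  obtain ⟨z, hz, hza⟩ := h
  have hp' : (0 : ℚ) < p := Nat.cast_pos.mpr hp
  refine ⟨fun i => z i / p, fun i => by positivity, fun k => ?_, ?_⟩
  · have := (sum_smul_le_iff v z (p • a)).mp hza k
    simp only [Pi.smul_apply, smul_eq_mul, Nat.cast_mul] at this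
    simp only [div_mul_eq_mul_div, ← Finset.sum_div, Int.cast_natCast]
    rw [div_le_iff₀ hp']
    linarith
  · rw [← Finset.sum_div, eq_div_iff hp'.ne']
    exact_mod_cast hz.symm

lemma exists_isGreatest_lpValues (hv : ∀ i, v i ≠ 0) {α : Fin s → ℤ} (hα : ∀ k, 0 ≤ α k) :
    ∃ r, IsGreatest (lpValues v α) r := by
  -- constraints `A y ≤ α` indexed by `inl k`, and `-y ≤ 0` indexed by `inr i`
  let c : Fin s ⊕ Fin q → Module.Dual ℚ (Fin q → ℚ) :=
    Sum.elim (fun k => ∑ i, (v i k : ℚ) • LinearMap.proj i) (fun i => -LinearMap.proj i)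
  have hc : ∀ (β : Fin s → ℚ) (y : Fin q → ℚ), (∀ j, c j y ≤ Sum.elim β 0 j) ↔
      (∀ i, 0 ≤ y i) ∧ ∀ k, ∑ i, y i * (v i k : ℚ) ≤ β k := by
    intro β y
    simp [c, Sum.forall, mul_comm, and_comm]
  have hrec : ∀ d, (∀ j, c j d ≤ 0) → d = 0 := by
    intro d hd
    obtain ⟨hd0, hdv⟩ := (hc 0 d).mp fun j => by simpa [Sum.elim_zero_zero] using hd j
    funext i
    obtain ⟨k, hk⟩ := Function.ne_iff.mp (hv i)
    have hterm := (Finset.sum_eq_zero_iff_of_nonneg fun i _ =>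
      mul_nonneg (hd0 i) (Nat.cast_nonneg (v i k))).mp
      (le_antisymm (hdv k) (Finset.sum_nonneg fun i _ => mul_nonneg (hd0 i) (Nat.cast_nonneg _)))
      i (Finset.mem_univ i)
    simpa [Nat.pos_of_ne_zero hk |>.ne'] using hterm
  obtain ⟨y, hy, hmax⟩ := exists_isMaxOn_polyhedron c (Sum.elim (fun k => (α k : ℚ)) 0) hrec
    (∑ i, LinearMap.proj i) (y₀ := 0) ((hc _ 0).mpr ⟨fun _ => le_rfl, fun k => by simpa using hα k⟩)
  obtain ⟨hy0, hyα⟩ := (hc _ y).mp hy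
  refine ⟨∑ i, y i, ⟨y, hy0, hyα, rfl⟩, ?_⟩
  rintro _ ⟨z, hz0, hzα, rfl⟩
  simpa using hmax ((hc _ z).mpr ⟨hz0, hzα⟩)

lemma isGreatest_ipValues_floor
    (h : ∀ n p a, 0 < p → ExponentInPow v (n * p) (p • a) → ExponentInPow v n a)
    {α : Fin s → ℤ} {r : ℚ} (hr : IsGreatest (lpValues v α) r) :
    IsGreatest (ipValues v α) ⌊r⌋ := by
  have hα := nonneg_of_mem_lpValues v hr.1
  obtain ⟨n, hn⟩ := Int.eq_ofNat_of_zero_le (Int.floor_nonneg.mpr (hr.2 (zero_mem_lpValues v hα)))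
  lift α to Fin s → ℕ using hα
  refine ⟨?_, ?_⟩
  · rw [hn, Int.cast_natCast, natCast_mem_ipValues_iff]
    obtain ⟨p, hp, hnp⟩ := exists_exponentInPow_mul v hr.1 (n := n) (by
      rw [← Int.cast_natCast, ← hn]; exact Int.floor_le r)
    exact h n p α hp hnp
  · rintro _ ⟨y, hy, rfl⟩
    have := hr.2 (ipValues_subset_lpValues v _ ⟨y, hy, rfl⟩)
    rw [← Nat.cast_sum] at this ⊢
    exact_mod_cast Int.le_floor.mpr (by exact_mod_cast this)

lemma exponentInPow_of_mul
    (hround : ∀ α r, IsGreatest (lpValues v α) r → IsGreatest (ipValues v α) ⌊r⌋)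
    {n p : ℕ} {a : Fin s → ℕ} (hp : 0 < p) (h : ExponentInPow v (n * p) (p • a)) :
    ExponentInPow v n a := by
  obtain ⟨i, hi⟩ | hv := em (∃ i, v i = 0)
  · exact .of_eq_zero hi
  obtain ⟨r, hr⟩ := exists_isGreatest_lpValues v (not_exists.mp hv) (α := fun k => a k)
    fun k => Int.natCast_nonneg _
  have hnr : (n : ℤ) ≤ ⌊r⌋ :=
    Int.le_floor.mpr (by exact_mod_cast hr.2 (natCast_mem_lpValues v hp h))
  obtain ⟨m, hm⟩ := Int.eq_ofNat_of_zero_le ((Int.natCast_nonneg n).trans hnr)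
  have hmem := (hround _ r hr).1
  rw [hm, Int.cast_natCast, natCast_mem_ipValues_iff] at hmem
  exact hmem.of_le (by omega)

end Rounding

theorem normal_iff_integer_rounding
    (K : Type*) [Field K] {s q : ℕ} (v : Fin q → Fin s → ℕ) :
    IsNormalIdeal (monIdeal K v) ↔
      ∀ (α : Fin s → ℤ) (r : ℚ),
        IsGreatest {c : ℚ | ∃ y : Fin q → ℚ, (∀ i, 0 ≤ y i) ∧
            (∀ k, (∑ i, y i * (v i k : ℚ)) ≤ (α k : ℚ)) ∧ c = ∑ i, y i} r →
        IsGreatest {c : ℚ | ∃ y : Fin q → ℕ,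
            (∀ k, (∑ i, (y i : ℚ) * (v i k : ℚ)) ≤ (α k : ℚ)) ∧ c = ∑ i, (y i : ℚ)}
          ((⌊r⌋ : ℤ) : ℚ) := by
  change _ ↔ ∀ α r, IsGreatest (lpValues v α) r → IsGreatest (ipValues v α) ⌊r⌋
  rw [isNormalIdeal_monIdeal_iff]
  exact ⟨fun h _ _ => isGreatest_ipValues_floor v h, fun h _ _ _ => exponentInPow_of_mul v h⟩
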